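/- Let H be a subgyrogroup of a gyrogroup G. If H is strong in G (i.e., gyr[a,b](H) = H for all a, b ∈ G), then the coset space G/H = {a ⊕ H : a ∈ G} is a minimally invariant set of the geometry (G, Γ_m): it is invariant under Γ_m and contains no nonempty proper invariant subset. -/
import Mathlib


/-- A gyrogroup: a set with a binary operation `op`, a left identity `e`, left inverses
`inv`, and gyroautomorphisms `gyr a b` (bijective and operation-preserving) satisfying the
left gyroassociative law and the left loop property. -/
class Gyrogroup (G : Type*) where
  /-- the gyrogroup operation `⊕` -/
  op : G → G → G
  /-- the identity element -/
  e : G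
  /-- the inverse `⊖a` -/
  inv : G → G
  /-- (G1) `e ⊕ a = a` -/
  op_e : ∀ a : G, op e a = a
  /-- (G2) `⊖a ⊕ a = e` -/
  op_inv : ∀ a : G, op (inv a) a = e
  /-- the gyroautomorphism `gyr[a, b]` -/
  gyr : G → G → G → G
  /-- (G3) `gyr[a, b]` is bijective -/
  gyr_bijective : ∀ a b : G, Function.Bijective (gyr a b)
  /-- (G3) `gyr[a, b]` preserves the operation -/
  gyr_op : ∀ a b x y : G, gyr a b (op x y) = op (gyr a b x) (gyr a b y)
  /-- (G3) the left gyroassociative law -/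
  gyrassoc : ∀ a b c : G, op a (op b c) = op (op a b) (gyr a b c)
  /-- (G4) the left loop property -/
  loop : ∀ a b : G, gyr (op a b) b = gyr a b

namespace Gyrogroup

variable {G : Type*} [Gyrogroup G]

theorem key (x z : G) : op (inv x) (op x z) = gyr (inv x) x z := by
  rw [gyrassoc, op_inv, op_e]

theorem L_injective (x : G) : Function.Injective (op x) := by
  intro z₁ z₂ h
  have h1 : gyr (inv x) x z₁ = gyr (inv x) x z₂ := by
    rw [← key, ← key, h]
  exact (gyr_bijective (inv x) x).1 h1

theorem L_surjective (x : G) : Function.Surjective (op x) := by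
  intro w
  obtain ⟨z, hz⟩ := (gyr_bijective (inv x) x).2 (op (inv x) w)
  exact ⟨z, L_injective (inv x) (by rw [key, hz])⟩

theorem L_bijective (x : G) : Function.Bijective (op x) :=
  ⟨L_injective x, L_surjective x⟩

/-- The left gyrotranslation `L_a : x ↦ a ⊕ x` as a permutation of `G`. -/
noncomputable def Lperm (a : G) : Equiv.Perm G := Equiv.ofBijective (op a) (L_bijective a)

/-- The gyroautomorphism `gyr[a, b]` as a permutation of `G`. -/
noncomputable def gyrPerm (a b : G) : Equiv.Perm G := Equiv.ofBijective (gyr a b) (gyr_bijective a b)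

/-- `GYR(G)`: the subgroup of `Sym(G)` generated by all gyroautomorphisms. -/
def GYR (G : Type*) [Gyrogroup G] : Subgroup (Equiv.Perm G) :=
  Subgroup.closure {π : Equiv.Perm G | ∃ a b : G, π = gyrPerm a b}

/-- `Γₘ = {L_a ∘ γ : a ∈ G, γ ∈ GYR(G)}`, a subgroup of `Sym(G)`. -/
def Γm (G : Type*) [Gyrogroup G] : Set (Equiv.Perm G) :=
  {T : Equiv.Perm G | ∃ a : G, ∃ γ ∈ GYR G, T = Lperm a * γ}

end Gyrogroup

/-- A set of figures is invariant if it is closed under all transformations of the geometry. -/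
def IsInvariantSet {S : Type*} (𝒯 : Set (Equiv.Perm S)) (𝒞 : Set (Set S)) : Prop :=
  ∀ F ∈ 𝒞, ∀ t ∈ 𝒯, ⇑t '' F ∈ 𝒞

/-- An invariant set is minimally invariant if it contains no nonempty proper invariant
subset. -/
def IsMinimallyInvariantSet {S : Type*} (𝒯 : Set (Equiv.Perm S)) (𝒞 : Set (Set S)) : Prop :=
  IsInvariantSet 𝒯 𝒞 ∧ ∀ 𝒟 ⊆ 𝒞, IsInvariantSet 𝒯 𝒟 → 𝒟.Nonempty → 𝒟 = 𝒞

/-- `H` is a subgyrogroup of the gyrogroup `G`: it is nonempty, closed under the gyrogroup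
operation and inverses (hence a gyrogroup under the operation of `G`), and
`gyr[a,b](H) = H` for all `a, b ∈ H`. -/
def IsSubgyrogroup {G : Type*} [Gyrogroup G] (H : Set G) : Prop :=
  H.Nonempty ∧ (∀ a ∈ H, ∀ b ∈ H, Gyrogroup.op a b ∈ H) ∧
    (∀ a ∈ H, Gyrogroup.inv a ∈ H) ∧
    ∀ a ∈ H, ∀ b ∈ H, Gyrogroup.gyr a b '' H = H

section Aux

open Gyrogroup

variable {G : Type*} [Gyrogroup G]

theorem gyr_e_apply (a c : G) : gyr (e : G) a c = c := by
  have h := gyrassoc (e : G) a c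
  rw [op_e, op_e] at h
  exact (L_injective a h).symm

theorem gyr_inv_self (a c : G) : gyr (inv a) a c = c := by
  have h := loop (inv a) a
  rw [op_inv] at h
  rw [← h, gyr_e_apply]

theorem left_cancel (x z : G) : op (inv x) (op x z) = z := by
  rw [key, gyr_inv_self]

theorem GYR_prop (H : Set G) (hstrong : ∀ a b : G, gyr a b '' H = H) :
    ∀ γ ∈ GYR G, (∀ x y : G, γ (op x y) = op (γ x) (γ y)) ∧ ⇑γ '' H = H := by
  intro γ hγ
  induction hγ using Subgroup.closure_induction with
  | mem π hπ =>
    obtain ⟨a, b, rfl⟩ := hπ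
    constructor
    · intro x y
      simp [gyrPerm, Equiv.ofBijective, gyr_op a b x y]
    · show (gyr a b) '' H = H
      exact hstrong a b
  | one => exact ⟨fun x y => rfl, Set.image_id H⟩
  | mul π σ hπ hσ ihπ ihσ =>
    refine ⟨fun x y => ?_, ?_⟩
    · show π (σ (op x y)) = op (π (σ x)) (π (σ y))
      rw [ihσ.1, ihπ.1]
    · have hc : ⇑(π * σ) = ⇑π ∘ ⇑σ := rfl
      rw [hc, Set.image_comp, ihσ.2, ihπ.2]
  | inv π hπ ihπ =>
    refine ⟨fun x y => ?_, ?_⟩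
    · apply π.injective
      show π (π⁻¹ (op x y)) = π (op (π⁻¹ x) (π⁻¹ y))
      rw [ihπ.1]
      simp
    · conv_lhs => rw [← ihπ.2]
      rw [← Set.image_comp]
      simp

end Aux

open Gyrogroup in
/-- If `H` is a strong subgyrogroup of a gyrogroup `G` (`gyr[a,b](H) = H` for all
`a, b ∈ G`), then the coset space `G/H = {a ⊕ H : a ∈ G}` is a minimally invariant set
of the geometry `(G, Γₘ)`. -/
theorem stmt15 {G : Type*} [Gyrogroup G] (H : Set G) (hH : IsSubgyrogroup H)
    (hstrong : ∀ a b : G, gyr a b '' H = H) :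
    IsMinimallyInvariantSet (Γm G) {X : Set G | ∃ a : G, X = op a '' H} := by
  constructor
  · rintro X ⟨b, rfl⟩ T ⟨a, γ, hγ, rfl⟩
    obtain ⟨hop, hfix⟩ := GYR_prop H hstrong γ hγ
    refine ⟨op a (γ b), ?_⟩
    have hc : ⇑(Lperm a * γ) = op a ∘ ⇑γ := rfl
    rw [hc, Set.image_comp]
    have h1 : ⇑γ '' (op b '' H) = op (γ b) '' H := by
      rw [← Set.image_comp]
      have : (⇑γ ∘ op b) '' H = op (γ b) '' (⇑γ '' H) := by
        rw [← Set.image_comp]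
        exact Set.image_congr' (fun h => hop b h)
      rw [this, hfix]
    rw [h1, ← Set.image_comp]
    have h2 : (op a ∘ op (γ b)) '' H = op (op a (γ b)) '' (gyr a (γ b) '' H) := by
      rw [← Set.image_comp]
      exact Set.image_congr' (fun h => gyrassoc a (γ b) h)
    rw [h2, hstrong]
  · intro 𝒟 h𝒟 hinv ⟨X, hX⟩
    have hHmem : H ∈ 𝒟 := by
      obtain ⟨b, rfl⟩ := h𝒟 hX
      have hT : (Lperm (inv b) * 1) ∈ Γm G := ⟨inv b, 1, one_mem _, rfl⟩
      have := hinv _ hX _ hT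
      have heq : ⇑(Lperm (inv b) * 1) '' (op b '' H) = H := by
        rw [mul_one, ← Set.image_comp]
        have : (⇑(Lperm (inv b)) ∘ op b) '' H = id '' H := by
          exact Set.image_congr' (fun h => left_cancel b h)
        rw [this, Set.image_id]
      rwa [heq] at this
    apply Set.Subset.antisymm h𝒟
    rintro Y ⟨a, rfl⟩
    have hT : (Lperm a * 1) ∈ Γm G := ⟨a, 1, one_mem _, rfl⟩
    have := hinv _ hHmem _ hT
    have heq : ⇑(Lperm a * 1) '' H = op a '' H := by
      rw [mul_one]; rfl
    rwa [heq] at this
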